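/- Let C and D be pure submonoids of (ℤⁿ, +). Then conv(C) ∩ conv(D) = conv(C ∩ conv(D)) = conv(C ∩ D), where conv denotes convex hull in ℝⁿ. -/

import Mathlib

/-- Canonical embedding of `ℤⁿ` into `ℝⁿ`. -/
def coeR {n : ℕ} (α : Fin n → ℤ) : Fin n → ℝ := fun i => (α i : ℝ)

/-- Convex hull in `ℝⁿ` of a subset of `ℤⁿ`. -/
def convC {n : ℕ} (C : Set (Fin n → ℤ)) : Set (Fin n → ℝ) :=
  convexHull ℝ (coeR '' C)

/-- The closure `cl(C) = ℤⁿ ∩ topological-closure(conv C)` of a subset of `ℤⁿ`. -/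
def intCl {n : ℕ} (C : Set (Fin n → ℤ)) : Set (Fin n → ℤ) :=
  {α | coeR α ∈ closure (convC C)}

/-- `C` is pure: `kα ∈ C` with `k ≥ 1` implies `α ∈ C`. -/
def IsPure {n : ℕ} (C : Set (Fin n → ℤ)) : Prop :=
  ∀ (k : ℕ) (α : Fin n → ℤ), 1 ≤ k → k • α ∈ C → α ∈ C

/-- `C` is a submonoid of `(ℤⁿ, +)` (as a set). -/
def IsSubmonoidSet {n : ℕ} (C : Set (Fin n → ℤ)) : Prop :=
  (0 : Fin n → ℤ) ∈ C ∧ ∀ a ∈ C, ∀ b ∈ C, a + b ∈ C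

/-- `M` is a finitely generated monoid (as a subset of `ℤⁿ`). -/
def IsFGSet {n : ℕ} (M : Set (Fin n → ℤ)) : Prop :=
  ∃ F : Finset (Fin n → ℤ),
    (AddSubmonoid.closure (F : Set (Fin n → ℤ)) : Set (Fin n → ℤ)) = M

/-- `C` is almost prismal: for every real subspace `V ⊆ ℝⁿ`, `cl(C ∩ V)` is finitely generated. -/
def AlmostPrismal {n : ℕ} (C : Set (Fin n → ℤ)) : Prop :=
  ∀ V : Submodule ℝ (Fin n → ℝ), IsFGSet (intCl {α ∈ C | coeR α ∈ V})

/-- `C` is prismal: pure and almost prismal. -/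
def Prismal {n : ℕ} (C : Set (Fin n → ℤ)) : Prop := IsPure C ∧ AlmostPrismal C

/-!
Convex weights `(a, b)` with `∑ aᵢ cᵢ = ∑ bₖ dₖ`, for points `cᵢ ∈ C` and `dₖ ∈ D`, form a bounded
polyhedron cut out by rational equations. By Krein–Milman it is the convex hull of its extreme
points, and an extreme point is the unique solution of the rational system obtained by also
fixing its zero coordinates, hence rational. Clearing the denominators of rational weights by `N`
turns `∑ aᵢ cᵢ` into `β / N` with `β ∈ C ∩ D`, a point of the segment `[0, β]`; so
`conv C ∩ conv D = conv (C ∩ D)` for all submonoids. For an integer point `α ∈ conv D`, this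
applied to `ℕα` and `D` puts `α` in `conv (ℕα ∩ D)`, so `kα ∈ D` for some `k ≥ 1` (or `α = 0`),
and purity gives `α ∈ D`.
-/

open Set Matrix Topology

theorem Matrix.exists_mulVec_eq_of_map_ratCast {m ι K : Type*} [Fintype m] [Fintype ι] [Field K]
    [CharZero K] (A : Matrix m ι ℚ) (b : m → ℚ) (x : ι → K)
    (hx : A.map Rat.cast *ᵥ x = Rat.cast ∘ b) :
    ∃ q : ι → ℚ, A *ᵥ q = b := by
  -- otherwise a rational functional kills the columns of `A` but not `b`, and still does over `K`
  by_contra! h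
  obtain ⟨φ, hφb, hφA⟩ := Submodule.exists_dual_map_eq_bot_of_notMem
    (p := LinearMap.range A.mulVecLin) (x := b) (fun ⟨q, hq⟩ => h q hq) inferInstance
  classical
  set y : m → ℚ := fun k => φ fun j => if k = j then 1 else 0
  have hφ : ∀ v, φ v = v ⬝ᵥ y := fun v => by
    simp [LinearMap.pi_apply_eq_sum_univ φ v, dotProduct, y]
  have hyA : y ᵥ* A = 0 := by
    ext i
    have : φ (A *ᵥ Pi.single i 1) = 0 :=
      (Submodule.mem_bot ℚ).1 (hφA ▸ Submodule.mem_map_of_mem (LinearMap.mem_range_self _ _))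
    rwa [hφ, dotProduct_comm, dotProduct_mulVec, dotProduct_single, mul_one] at this
  apply hφb
  have : ((y ⬝ᵥ b : ℚ) : K) = 0 := by
    rw [← Rat.coe_castHom (α := K), RingHom.map_dotProduct, Rat.coe_castHom, ← hx,
      dotProduct_mulVec]
    have hyA' : (Rat.cast ∘ y) ᵥ* A.map Rat.cast = (0 : ι → K) := by
      ext i
      simpa [hyA] using (RingHom.map_vecMul (Rat.castHom K) A y i).symm
    rw [hyA', zero_dotProduct]
  rw [hφ, dotProduct_comm]
  exact_mod_cast this

theorem Matrix.map_ratCast_mulVec {m ι K : Type*} [Fintype ι] [DivisionRing K] [CharZero K]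
    (A : Matrix m ι ℚ) (q : ι → ℚ) :
    A.map (Rat.cast : ℚ → K) *ᵥ (Rat.cast ∘ q) = Rat.cast ∘ (A *ᵥ q) :=
  funext fun k => (RingHom.map_mulVec (Rat.castHom K) A q k).symm

section Polyhedron

variable {κ ι : Type*} [Fintype ι] (A : Matrix κ ι ℚ) (b : κ → ℚ)

def nonnegSolutions : Set (ι → ℝ) := {t | 0 ≤ t ∧ A.map Rat.cast *ᵥ t = Rat.cast ∘ b}

variable {A b}

theorem convex_nonnegSolutions : Convex ℝ (nonnegSolutions A b) :=
  (convex_Ici 0).inter ((convex_singleton _).linear_preimage (A.map Rat.cast).mulVecLin)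

theorem isClosed_nonnegSolutions : IsClosed (nonnegSolutions A b) :=
  isClosed_Ici.inter (isClosed_eq (continuous_const.matrix_mulVec continuous_id) continuous_const)

theorem eq_of_mem_extremePoints_nonnegSolutions {e t : ι → ℝ}
    (he : e ∈ (nonnegSolutions A b).extremePoints ℝ) (ht : A.map Rat.cast *ᵥ t = Rat.cast ∘ b)
    (hsupp : ∀ i, e i = 0 → t i = 0) : t = e := by
  -- `e ± ε (t - e)` stay in the polyhedron for small `ε > 0`
  set d := t - e
  have hd : A.map Rat.cast *ᵥ d = 0 := by rw [mulVec_sub, ht, he.1.2, sub_self]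
  have hsmall : ∀ᶠ ε in 𝓝[>] (0 : ℝ), ∀ i, ε * |d i| ≤ e i := by
    refine Filter.eventually_all.2 fun i => ?_
    rcases (he.1.1 i).eq_or_lt with he0 | hpos
    · simp [d, ← he0, hsupp i he0.symm]
    · exact (((continuous_id.mul continuous_const).tendsto' 0 0 (zero_mul _)).eventually
        (ge_mem_nhds hpos)).filter_mono nhdsWithin_le_nhds
  obtain ⟨ε, hε, hε0⟩ := (hsmall.and self_mem_nhdsWithin).exists
  have hmem : ∀ s : ℝ, |s| ≤ ε → e + s • d ∈ nonnegSolutions A b := fun s hs =>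
    ⟨fun i => by
      have := (mul_le_mul_of_nonneg_right hs (abs_nonneg (d i))).trans (hε i)
      rw [← abs_mul] at this
      simpa [← neg_le_iff_add_nonneg'] using neg_le_of_abs_le this,
     by rw [mulVec_add, mulVec_smul, hd, smul_zero, add_zero, he.1.2]⟩
  have := he.2 (hmem ε (abs_of_pos hε0).le) (hmem (-ε) (by rw [abs_neg, abs_of_pos hε0]))
    ⟨1 / 2, 1 / 2, by norm_num, by norm_num, by norm_num, by module⟩
  exact sub_eq_zero.1 ((smul_eq_zero.1 (add_eq_left.1 this)).resolve_left hε0.ne')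

theorem exists_ratCast_eq_of_mem_extremePoints_nonnegSolutions [Fintype κ] {e : ι → ℝ}
    (he : e ∈ (nonnegSolutions A b).extremePoints ℝ) : ∃ q : ι → ℚ, Rat.cast ∘ q = e := by
  classical
  set Ae := fromRows A (diagonal fun i => if e i = 0 then (1 : ℚ) else 0)
  have hAe : Ae.map Rat.cast *ᵥ e = Rat.cast ∘ Sum.elim b 0 := by
    rw [fromRows_map, fromRows_mulVec, diagonal_map (by simp)]
    ext (k | i)
    · simp [he.1.2]
    · by_cases h : e i = 0 <;> simp [mulVec_diagonal, h]
  obtain ⟨q, hq⟩ := Ae.exists_mulVec_eq_of_map_ratCast _ e hAe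
  rw [fromRows_mulVec] at hq
  have hAq : A *ᵥ q = b := funext fun k => congrFun hq (Sum.inl k)
  have hsupp : ∀ i, e i = 0 → q i = 0 := fun i h => by
    simpa [mulVec_diagonal, h] using congrFun hq (Sum.inr i)
  refine ⟨q, eq_of_mem_extremePoints_nonnegSolutions he ?_ fun i h => by simp [hsupp i h]⟩
  rw [map_ratCast_mulVec, hAq]

theorem finite_extremePoints_nonnegSolutions [Fintype κ] :
    ((nonnegSolutions A b).extremePoints ℝ).Finite :=
  Finite.of_finite_image (f := fun e i => e i = 0) (toFinite _) fun _ he _ he' hee' =>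
    eq_of_mem_extremePoints_nonnegSolutions he' he.1.2 fun i => (congrFun hee' i).mpr

theorem convexHull_nonnegSolutions_inter_range_ratCast [Fintype κ]
    (hP : Bornology.IsBounded (nonnegSolutions A b)) :
    convexHull ℝ (nonnegSolutions A b ∩ range (fun q : ι → ℚ => Rat.cast ∘ q)) =
      nonnegSolutions A b := by
  refine (convexHull_min inter_subset_left convex_nonnegSolutions).antisymm ?_
  calc nonnegSolutions A b
      = closure (convexHull ℝ ((nonnegSolutions A b).extremePoints ℝ)) :=
        (closure_convexHull_extremePoints (Metric.isCompact_of_isClosed_isBounded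
          isClosed_nonnegSolutions hP) convex_nonnegSolutions).symm
    _ = convexHull ℝ ((nonnegSolutions A b).extremePoints ℝ) :=
        (finite_extremePoints_nonnegSolutions.isClosed_convexHull ℝ).closure_eq
    _ ⊆ convexHull ℝ (nonnegSolutions A b ∩ range (fun q : ι → ℚ => Rat.cast ∘ q)) :=
        convexHull_mono fun _ he =>
          ⟨he.1, exists_ratCast_eq_of_mem_extremePoints_nonnegSolutions he⟩

end Polyhedron

theorem exists_pos_nat_mul_eq_natCast {ι : Type*} [Fintype ι] (q : ι → ℚ) (hq : 0 ≤ q) :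
    ∃ N : ℕ, 0 < N ∧ ∃ m : ι → ℕ, ∀ i, (m i : ℚ) = N * q i := by
  refine ⟨∏ i, (q i).den, Finset.prod_pos fun i _ => (q i).den_pos, ?_⟩
  have (i : ι) : ∃ m : ℕ, (m : ℚ) = (∏ i, (q i).den : ℕ) * q i := by
    obtain ⟨k, hk⟩ := Finset.dvd_prod_of_mem (fun i => (q i).den) (Finset.mem_univ i)
    refine ⟨k * (q i).num.toNat, ?_⟩
    rw [hk]
    push_cast
    have hnum : ((q i).num.toNat : ℚ) = (q i).num := by
      exact_mod_cast Int.toNat_of_nonneg (Rat.num_nonneg.2 (hq i))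
    rw [hnum, ← Rat.den_mul_eq_num]
    ring
  exact Classical.skolem.1 this

section Coe

variable {n : ℕ}

theorem coeR_injective : Function.Injective (coeR (n := n)) :=
  fun _ _ h => funext fun j => by simpa [coeR] using congrFun h j

theorem coeR_sum_nsmul {ι : Type*} [Fintype ι] {m : ι → ℕ} {a : ι → ℝ} {N : ℝ}
    (hm : ∀ i, (m i : ℝ) = N * a i) (c : ι → Fin n → ℤ) :
    coeR (∑ i, m i • c i) = N • ∑ i, a i • coeR (c i) := by
  ext j
  simp [coeR, Finset.sum_apply, Finset.mul_sum, hm, mul_assoc]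

theorem IsSubmonoidSet.sum_nsmul_mem {C : Set (Fin n → ℤ)} (hC : IsSubmonoidSet C)
    {ι : Type*} [Fintype ι] {c : ι → Fin n → ℤ} (hc : ∀ i, c i ∈ C) (m : ι → ℕ) :
    ∑ i, m i • c i ∈ C :=
  let S : AddSubmonoid (Fin n → ℤ) := ⟨⟨C, fun ha hb => hC.2 _ ha _ hb⟩, hC.1⟩
  show _ ∈ S from sum_mem fun i _ => nsmul_mem (show c i ∈ S from hc i) (m i)

end Coe

section Intersection

variable {n : ℕ} {ι κ : Type*}

def intersectionMatrix (c : ι → Fin n → ℤ) (d : κ → Fin n → ℤ) :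
    Matrix (Fin n ⊕ Bool) (ι ⊕ κ) ℚ :=
  Matrix.of fun r s => match r, s with
    | .inl j, .inl i => c i j
    | .inl j, .inr k => -d k j
    | .inr β, .inl _ => if β then 1 else 0
    | .inr β, .inr _ => if β then 0 else 1

variable [Fintype ι] [Fintype κ] {c : ι → Fin n → ℤ} {d : κ → Fin n → ℤ}

theorem sumElim_mem_nonnegSolutions_intersectionMatrix_iff {a : ι → ℝ} {b : κ → ℝ} :
    Sum.elim a b ∈ nonnegSolutions (intersectionMatrix c d) (Sum.elim 0 1) ↔
      0 ≤ a ∧ 0 ≤ b ∧ ∑ i, a i • coeR (c i) = ∑ k, b k • coeR (d k) ∧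
        ∑ i, a i = 1 ∧ ∑ k, b k = 1 := by
  simp [nonnegSolutions, Pi.le_def, funext_iff, Bool.forall_bool, mulVec, dotProduct,
    Fintype.sum_sum_type, intersectionMatrix, Finset.sum_apply, coeR, mul_comm, ← sub_eq_add_neg,
    sub_eq_zero]
  tauto

theorem isBounded_nonnegSolutions_intersectionMatrix :
    Bornology.IsBounded (nonnegSolutions (intersectionMatrix c d) (Sum.elim 0 1)) := by
  refine (Metric.isBounded_Icc (0 : ι ⊕ κ → ℝ) 1).subset fun t ht => ?_
  rw [← Sum.elim_comp_inl_inr t] at ht ⊢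
  obtain ⟨ha0, hb0, -, ha1, hb1⟩ := sumElim_mem_nonnegSolutions_intersectionMatrix_iff.1 ht
  refine ⟨Sum.nonneg_elim_iff.2 ⟨ha0, hb0⟩, ?_⟩
  rintro (i | k)
  · exact (Finset.single_le_sum (fun i _ => ha0 i) (Finset.mem_univ i)).trans ha1.le
  · exact (Finset.single_le_sum (fun k _ => hb0 k) (Finset.mem_univ k)).trans hb1.le

theorem sum_smul_coeR_mem_convC_inter {C D : Set (Fin n → ℤ)} (hC : IsSubmonoidSet C)
    (hD : IsSubmonoidSet D) (hc : ∀ i, c i ∈ C) (hd : ∀ k, d k ∈ D) {a : ι → ℚ} {b : κ → ℚ}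
    (hab : Sum.elim (Rat.cast ∘ a) (Rat.cast ∘ b) ∈
      nonnegSolutions (intersectionMatrix c d) (Sum.elim 0 1)) :
    ∑ i, (a i : ℝ) • coeR (c i) ∈ convC (C ∩ D) := by
  obtain ⟨ha0, hb0, hsum, -⟩ := sumElim_mem_nonnegSolutions_intersectionMatrix_iff.1 hab
  obtain ⟨N, hN, m, hm⟩ := exists_pos_nat_mul_eq_natCast (Sum.elim a b)
    (Sum.nonneg_elim_iff.2
      ⟨fun i => Rat.cast_nonneg.1 (ha0 i), fun k => Rat.cast_nonneg.1 (hb0 k)⟩)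
  have hβ := coeR_sum_nsmul (m := fun i => m (.inl i)) (a := fun i => (a i : ℝ)) (N := N)
    (fun i => by simpa using congrArg (Rat.cast : ℚ → ℝ) (hm (.inl i))) c
  have hγ := coeR_sum_nsmul (m := fun k => m (.inr k)) (a := fun k => (b k : ℝ)) (N := N)
    (fun k => by simpa using congrArg (Rat.cast : ℚ → ℝ) (hm (.inr k))) d
  have hβγ : ∑ i, m (.inl i) • c i = ∑ k, m (.inr k) • d k :=
    coeR_injective (by rw [hβ, hγ]; exact congrArg _ hsum)
  have hβCD : ∑ i, m (.inl i) • c i ∈ C ∩ D :=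
    ⟨hC.sum_nsmul_mem hc _, hβγ ▸ hD.sum_nsmul_mem hd _⟩
  have h0 : (0 : Fin n → ℝ) ∈ convC (C ∩ D) :=
    subset_convexHull ℝ _ ⟨0, ⟨hC.1, hD.1⟩, funext fun _ => Int.cast_zero⟩
  have := (convex_convexHull ℝ _).smul_mem_of_zero_mem h0 (subset_convexHull ℝ _ ⟨_, hβCD, hβ⟩)
    ⟨inv_nonneg.2 (Nat.cast_nonneg N), inv_le_one_of_one_le₀ (by exact_mod_cast hN)⟩
  rwa [inv_smul_smul₀ (by positivity)] at this

end Intersection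

theorem convC_inter_convC_subset {n : ℕ} {C D : Set (Fin n → ℤ)} (hC : IsSubmonoidSet C)
    (hD : IsSubmonoidSet D) : convC C ∩ convC D ⊆ convC (C ∩ D) := by
  rintro x ⟨hxC, hxD⟩
  obtain ⟨ι, _, a, _, ha0, ha1, hc, rfl⟩ := mem_convexHull_iff_exists_fintype.1 hxC
  obtain ⟨κ, _, b, _, hb0, hb1, hd, hab⟩ := mem_convexHull_iff_exists_fintype.1 hxD
  choose c hcC hc using hc
  choose d hdD hd using hd
  obtain rfl := funext hc
  obtain rfl := funext hd
  set P := nonnegSolutions (intersectionMatrix c d) (Sum.elim 0 1)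
  let L : (ι ⊕ κ → ℝ) →ₗ[ℝ] Fin n → ℝ :=
    ∑ i, (LinearMap.proj (Sum.inl i)).smulRight (coeR (c i))
  have hLP : L '' (P ∩ range fun q => Rat.cast ∘ q) ⊆ convC (C ∩ D) := by
    rintro _ ⟨_, ⟨hq, q, rfl⟩, rfl⟩
    obtain ⟨a', b', rfl⟩ : ∃ a' b', q = Sum.elim a' b' :=
      ⟨_, _, (Sum.elim_comp_inl_inr q).symm⟩
    simp only [Sum.comp_elim] at hq
    simpa [L] using sum_smul_coeR_mem_convC_inter hC hD hcC hdD hq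
  have hx : Sum.elim a b ∈ convexHull ℝ (P ∩ range fun q => Rat.cast ∘ q) := by
    rw [convexHull_nonnegSolutions_inter_range_ratCast isBounded_nonnegSolutions_intersectionMatrix]
    exact sumElim_mem_nonnegSolutions_intersectionMatrix_iff.2 ⟨ha0, hb0, hab.symm, ha1, hb1⟩
  have := convexHull_min hLP (convex_convexHull ℝ _)
    (L.image_convexHull _ ▸ mem_image_of_mem L hx)
  simpa [L] using this

theorem IsPure.mem_of_coeR_mem_convC {n : ℕ} {D : Set (Fin n → ℤ)} (hpD : IsPure D)
    (hD : IsSubmonoidSet D) {α : Fin n → ℤ} (h : coeR α ∈ convC D) : α ∈ D := by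
  by_contra hα
  have hS : IsSubmonoidSet (range fun k : ℕ => k • α) :=
    ⟨⟨0, zero_smul ℕ α⟩, by rintro _ ⟨k, rfl⟩ _ ⟨l, rfl⟩; exact ⟨k + l, add_smul k l α⟩⟩
  have hSD : (range fun k : ℕ => k • α) ∩ D ⊆ {0} := by
    rintro _ ⟨⟨k, rfl⟩, hk⟩
    rcases k.eq_zero_or_pos with rfl | hk0
    · exact zero_smul ℕ α
    · exact absurd (hpD k α hk0 hk) hα
  have : coeR α ∈ convC {0} := convexHull_mono (image_mono hSD)
    (convC_inter_convC_subset hS hD ⟨subset_convexHull ℝ _ ⟨α, ⟨1, one_smul ℕ α⟩, rfl⟩, h⟩)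
  rw [convC, image_singleton, convexHull_singleton] at this
  exact hα (coeR_injective this ▸ hD.1)

theorem convexHull_inter_of_pure_general {n : ℕ} (C D : Set (Fin n → ℤ))
    (hC : IsSubmonoidSet C) (hD : IsSubmonoidSet D)
    (hpD : IsPure D) :
    convC C ∩ convC D = convexHull ℝ (coeR '' {α ∈ C | coeR α ∈ convC D}) ∧
    convexHull ℝ (coeR '' {α ∈ C | coeR α ∈ convC D}) = convC (C ∩ D) := by
  have hCD : {α ∈ C | coeR α ∈ convC D} = C ∩ D := ext fun α => and_congr_right fun _ =>
    ⟨hpD.mem_of_coeR_mem_convC hD, fun h => subset_convexHull ℝ _ (mem_image_of_mem coeR h)⟩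
  rw [hCD]
  refine ⟨(convC_inter_convC_subset hC hD).antisymm ?_, rfl⟩
  exact subset_inter (convexHull_mono (image_mono inter_subset_left))
    (convexHull_mono (image_mono inter_subset_right))

/-- For pure submonoids `C, D` of `ℤⁿ`:
`conv(C) ∩ conv(D) = conv(C ∩ conv(D)) = conv(C ∩ D)`. -/
theorem convexHull_inter_of_pure {n : ℕ} (C D : Set (Fin n → ℤ))
    (hC : IsSubmonoidSet C) (hD : IsSubmonoidSet D)
    (hpC : IsPure C) (hpD : IsPure D) :
    convC C ∩ convC D = convexHull ℝ (coeR '' {α ∈ C | coeR α ∈ convC D}) ∧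
    convexHull ℝ (coeR '' {α ∈ C | coeR α ∈ convC D}) = convC (C ∩ D) :=
  convexHull_inter_of_pure_general C D hC hD hpD
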